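/- Euler's identity: sum over k ≥ 0 of t^{k²} / (t;t)_k² equals 1/(t;t)_∞, as formal power series in t. -/

import Mathlib

/-!
The Gaussian binomials `[n, k]` satisfy the `q`-Vandermonde identity; its diagonal case
`[n + n, n] = ∑ₖ t ^ (k * k) [n, k] [n, n - k]`, together with the symmetry `[n, n - k] = [n, k]`,
is the finite Durfee-square identity `∑ₖ t ^ (k ^ 2) [n, k] ^ 2 = [n + n, n]`.
For `0 ≤ t < 1` the closed form `[n, k] = (t;t)ₙ / ((t;t)ₖ (t;t)ₙ₋ₖ)` gives `[n, k] → 1 / (t;t)ₖ`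
and `[n + n, n] → 1 / (t;t)_∞` as `n → ∞`, and `[n, k] ≤ 1 / (t;t)_∞` uniformly, so the terms are
dominated by `t ^ (k ^ 2) / (t;t)_∞ ^ 2` and Tannery's theorem passes to the limit.
-/

open Finset

variable {R : Type*}

/-- The Gaussian binomial coefficient, defined by the `q`-Pascal rule so that it makes sense in any
semiring; `qBinomial.eq_div` is the usual closed form. -/
def qBinomial [CommSemiring R] (t : R) : ℕ → ℕ → R
  | _, 0 => 1
  | 0, _ + 1 => 0
  | n + 1, k + 1 => qBinomial t n k + t ^ (k + 1) * qBinomial t n (k + 1)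

/-- `qPochhammer t n` is `(t;t)ₙ`. -/
def qPochhammer [CommRing R] (t : R) (n : ℕ) : R := ∏ i ∈ range n, (1 - t ^ (i + 1))

lemma qPochhammer_zero [CommRing R] (t : R) : qPochhammer t 0 = 1 := prod_range_zero _

lemma qPochhammer_succ [CommRing R] (t : R) (n : ℕ) :
    qPochhammer t (n + 1) = qPochhammer t n * (1 - t ^ (n + 1)) := prod_range_succ _ _

namespace qBinomial

section CommSemiring

variable [CommSemiring R] (t : R)

@[simp] lemma zero_right (n : ℕ) : qBinomial t n 0 = 1 := by cases n <;> rfl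

lemma succ_succ (n k : ℕ) :
    qBinomial t (n + 1) (k + 1) = qBinomial t n k + t ^ (k + 1) * qBinomial t n (k + 1) := rfl

@[simp] lemma zero_succ (k : ℕ) : qBinomial t 0 (k + 1) = 0 := rfl

lemma eq_zero_of_lt {n k : ℕ} (h : n < k) : qBinomial t n k = 0 := by
  induction n generalizing k with
  | zero => obtain ⟨k, rfl⟩ := Nat.exists_eq_succ_of_ne_zero h.ne'; rfl
  | succ n ih =>
    obtain ⟨k, rfl⟩ := Nat.exists_eq_succ_of_ne_zero (Nat.ne_zero_of_lt h)
    rw [succ_succ, ih (by omega), ih (by omega), mul_zero, add_zero]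

@[simp] lemma self (n : ℕ) : qBinomial t n n = 1 := by
  induction n with
  | zero => rfl
  | succ n ih => rw [succ_succ, ih, eq_zero_of_lt t n.lt_succ_self, mul_zero, add_zero]

theorem add_eq_sum_antidiagonal (m n k : ℕ) :
    qBinomial t (m + n) k =
      ∑ p ∈ antidiagonal k, t ^ (p.1 * (n - p.2)) * qBinomial t m p.1 * qBinomial t n p.2 := by
  induction n generalizing k with
  | zero =>
    cases k with
    | zero => simp
    | succ k => simp [Nat.sum_antidiagonal_succ']
  | succ n ih =>
    cases k with
    | zero => simp
    | succ k =>
      rw [← add_assoc, succ_succ, ih, ih, Nat.sum_antidiagonal_succ', Nat.sum_antidiagonal_succ']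
      simp only [zero_right, mul_one, Nat.sub_zero, Nat.add_sub_add_right, succ_succ, mul_add,
        sum_add_distrib, mul_sum]
      have hT : ∀ p ∈ antidiagonal k,
          t ^ (k + 1) * (t ^ (p.1 * (n - (p.2 + 1))) * qBinomial t m p.1 *
            qBinomial t n (p.2 + 1)) =
          t ^ (p.1 * (n - p.2)) * qBinomial t m p.1 *
            (t ^ (p.2 + 1) * qBinomial t n (p.2 + 1)) := by
        rintro ⟨i, j⟩ hij
        rw [HasAntidiagonal.mem_antidiagonal] at hij
        subst hij
        rcases lt_or_ge j n with h | h
        · obtain ⟨d, rfl⟩ := Nat.exists_eq_add_of_lt h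
          rw [show j + d + 1 - (j + 1) = d by omega, show j + d + 1 - j = d + 1 by omega]
          ring
        · simp [eq_zero_of_lt t (show n < j + 1 by omega)]
      rw [sum_congr rfl hT]
      ring

end CommSemiring

section CommRing

variable [CommRing R] (t : R)

theorem mul_qPochhammer_mul_qPochhammer (k l : ℕ) :
    qBinomial t (k + l) k * qPochhammer t k * qPochhammer t l = qPochhammer t (k + l) := by
  induction l generalizing k with
  | zero => simp [qPochhammer_zero]
  | succ l ihl =>
    induction k with
    | zero => simp [qPochhammer_zero]
    | succ k ihk =>
      have hl := ihl (k + 1)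
      rw [show k + 1 + l = k + (l + 1) by omega, qPochhammer_succ t k] at hl
      rw [qPochhammer_succ t l] at ihk
      rw [show k + 1 + (l + 1) = k + (l + 1) + 1 by omega, succ_succ, qPochhammer_succ t k,
        qPochhammer_succ t l, qPochhammer_succ]
      linear_combination (1 - t ^ (k + 1)) * ihk + t ^ (k + 1) * (1 - t ^ (l + 1)) * hl

theorem symm [IsDomain R] {k l : ℕ} (hk : qPochhammer t k ≠ 0) (hl : qPochhammer t l ≠ 0) :
    qBinomial t (k + l) l = qBinomial t (k + l) k := by
  refine mul_right_cancel₀ (mul_ne_zero hk hl) ?_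
  simp only [← mul_assoc]
  rw [mul_qPochhammer_mul_qPochhammer, mul_right_comm, add_comm k l,
    mul_qPochhammer_mul_qPochhammer]

theorem sum_range_pow_sq_mul_sq [IsDomain R] (ht : ∀ k, qPochhammer t k ≠ 0) (n : ℕ) :
    ∑ k ∈ range (n + 1), t ^ (k ^ 2) * qBinomial t n k ^ 2 = qBinomial t (n + n) n := by
  rw [add_eq_sum_antidiagonal, Nat.sum_antidiagonal_eq_sum_range_succ_mk]
  refine sum_congr rfl fun k hk => ?_
  obtain ⟨l, rfl⟩ := Nat.exists_eq_add_of_le (Nat.lt_succ_iff.mp (mem_range.mp hk))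
  rw [Nat.add_sub_cancel_left, Nat.add_sub_cancel, symm t (ht k) (ht l)]
  ring

end CommRing

theorem eq_div [Field R] (t : R) {k l : ℕ} (hk : qPochhammer t k ≠ 0) (hl : qPochhammer t l ≠ 0) :
    qBinomial t (k + l) k = qPochhammer t (k + l) / (qPochhammer t k * qPochhammer t l) := by
  rw [eq_div_iff (mul_ne_zero hk hl), ← mul_assoc, mul_qPochhammer_mul_qPochhammer]

theorem nonneg [CommSemiring R] [PartialOrder R] [IsOrderedRing R] {t : R} (ht : 0 ≤ t) (n k : ℕ) :
    0 ≤ qBinomial t n k := by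
  induction n generalizing k with
  | zero => cases k <;> simp
  | succ n ih =>
    cases k with
    | zero => simp
    | succ k => rw [succ_succ]; exact add_nonneg (ih k) (mul_nonneg (pow_nonneg ht _) (ih _))

end qBinomial

section Real

open Filter Topology

variable {t : ℝ} (ht0 : 0 ≤ t) (ht1 : t < 1)
include ht0 ht1

lemma one_sub_pow_succ_pos (i : ℕ) : 0 < 1 - t ^ (i + 1) :=
  sub_pos.2 (pow_lt_one₀ ht0 ht1 i.succ_ne_zero)

lemma qPochhammer_pos (n : ℕ) : 0 < qPochhammer t n :=
  prod_pos fun i _ => one_sub_pow_succ_pos ht0 ht1 i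

lemma qPochhammer_antitone : Antitone (qPochhammer t) :=
  antitone_nat_of_succ_le fun n => by
    rw [qPochhammer_succ]
    exact mul_le_of_le_one_right (qPochhammer_pos ht0 ht1 n).le (sub_le_self _ (pow_nonneg ht0 _))

lemma summable_log_one_sub_pow_succ : Summable fun i : ℕ => Real.log (1 - t ^ (i + 1)) := by
  have h : Summable fun i : ℕ => t ^ (i + 1) :=
    (summable_nat_add_iff 1).2 (summable_geometric_of_lt_one ht0 ht1)
  simpa [sub_eq_add_neg] using Real.summable_log_one_add_of_summable h.neg

lemma tprod_one_sub_pow_succ_pos : 0 < ∏' i : ℕ, (1 - t ^ (i + 1)) := by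
  rw [← Real.rexp_tsum_eq_tprod (one_sub_pow_succ_pos ht0 ht1)
    (summable_log_one_sub_pow_succ ht0 ht1)]
  exact Real.exp_pos _

lemma tendsto_qPochhammer : Tendsto (qPochhammer t) atTop (𝓝 (∏' i : ℕ, (1 - t ^ (i + 1)))) :=
  (Real.multipliable_of_summable_log (one_sub_pow_succ_pos ht0 ht1)
    (summable_log_one_sub_pow_succ ht0 ht1)).hasProd.tendsto_prod_nat

lemma tprod_one_sub_pow_succ_le_qPochhammer (n : ℕ) :
    ∏' i : ℕ, (1 - t ^ (i + 1)) ≤ qPochhammer t n :=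
  (qPochhammer_antitone ht0 ht1).le_of_tendsto (tendsto_qPochhammer ht0 ht1) n

namespace qBinomial

lemma le_inv_tprod (n k : ℕ) : qBinomial t n k ≤ (∏' i : ℕ, (1 - t ^ (i + 1)))⁻¹ := by
  have hQ := tprod_one_sub_pow_succ_pos ht0 ht1
  rcases le_or_gt k n with h | h
  · obtain ⟨l, rfl⟩ := Nat.exists_eq_add_of_le h
    have hk := qPochhammer_pos ht0 ht1 k
    rw [eq_div t hk.ne' (qPochhammer_pos ht0 ht1 l).ne']
    calc qPochhammer t (k + l) / (qPochhammer t k * qPochhammer t l)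
        ≤ qPochhammer t k / (qPochhammer t k * ∏' i : ℕ, (1 - t ^ (i + 1))) :=
          div_le_div₀ hk.le (qPochhammer_antitone ht0 ht1 (k.le_add_right l)) (by positivity)
            (mul_le_mul_of_nonneg_left (tprod_one_sub_pow_succ_le_qPochhammer ht0 ht1 l) hk.le)
      _ = (∏' i : ℕ, (1 - t ^ (i + 1)))⁻¹ := by field_simp
  · rw [eq_zero_of_lt t h]
    exact inv_nonneg.2 hQ.le

lemma tendsto_atTop (k : ℕ) :
    Tendsto (fun n => qBinomial t n k) atTop (𝓝 (qPochhammer t k)⁻¹) := by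
  have hQ := tprod_one_sub_pow_succ_pos ht0 ht1
  have hk := qPochhammer_pos ht0 ht1 k
  rw [← tendsto_add_atTop_iff_nat k]
  have h := ((tendsto_qPochhammer ht0 ht1).comp (tendsto_add_atTop_nat k)).div
    (tendsto_const_nhds.mul (tendsto_qPochhammer ht0 ht1)) (mul_pos hk hQ).ne'
  rw [show (∏' i : ℕ, (1 - t ^ (i + 1))) / (qPochhammer t k * ∏' i : ℕ, (1 - t ^ (i + 1))) =
    (qPochhammer t k)⁻¹ by field_simp] at h
  refine h.congr fun l => ?_
  rw [Pi.div_apply, Function.comp_apply, add_comm l k,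
    eq_div t hk.ne' (qPochhammer_pos ht0 ht1 l).ne']

lemma tendsto_add_self :
    Tendsto (fun n => qBinomial t (n + n) n) atTop (𝓝 (∏' i : ℕ, (1 - t ^ (i + 1)))⁻¹) := by
  have hQ := tprod_one_sub_pow_succ_pos ht0 ht1
  have h := ((tendsto_qPochhammer ht0 ht1).comp (tendsto_id.atTop_add_atTop tendsto_id)).div
    ((tendsto_qPochhammer ht0 ht1).mul (tendsto_qPochhammer ht0 ht1)) (mul_pos hQ hQ).ne'
  rw [div_mul_cancel_left₀ hQ.ne'] at h
  refine h.congr fun n => ?_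
  rw [eq_div t (qPochhammer_pos ht0 ht1 n).ne' (qPochhammer_pos ht0 ht1 n).ne']
  rfl

theorem tendsto_tsum_pow_sq_mul_sq :
    Tendsto (fun n => ∑' k, t ^ (k ^ 2) * qBinomial t n k ^ 2) atTop
      (𝓝 (∑' k, t ^ (k ^ 2) / qPochhammer t k ^ 2)) := by
  refine tendsto_tsum_of_dominated_convergence
    (bound := fun k => t ^ (k ^ 2) * ((∏' i : ℕ, (1 - t ^ (i + 1)))⁻¹) ^ 2) ?_ (fun k => ?_)
    (.of_forall fun n k => ?_)
  · refine Summable.mul_right _ ((summable_geometric_of_lt_one ht0 ht1).of_nonneg_of_le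
      (fun k => pow_nonneg ht0 _) fun k => ?_)
    exact pow_le_pow_of_le_one ht0 ht1.le (Nat.le_self_pow two_ne_zero k)
  · simpa [div_eq_mul_inv, inv_pow] using ((tendsto_atTop ht0 ht1 k).pow 2).const_mul (t ^ (k ^ 2))
  · have h := nonneg ht0 n k
    rw [Real.norm_of_nonneg (by positivity)]
    gcongr
    exact le_inv_tprod ht0 ht1 n k

end qBinomial

end Real

/-- Euler's identity: `∑_{k≥0} t^{k²} / (t;t)_k² = 1/(t;t)_∞` (for `0 < t < 1`,
equivalently as formal power series in `t`). -/
theorem stmt_12 (t : ℝ) (ht0 : 0 < t) (ht1 : t < 1) :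
    ∑' k : ℕ, t ^ (k ^ 2) / (∏ i ∈ Finset.range k, (1 - t ^ (i + 1))) ^ 2 =
      (∏' i : ℕ, (1 - t ^ (i + 1)))⁻¹ := by
  have hfinite (n : ℕ) : ∑' k, t ^ (k ^ 2) * qBinomial t n k ^ 2 = qBinomial t (n + n) n := by
    rw [tsum_eq_sum (s := range (n + 1)) fun k hk => ?_]
    · exact qBinomial.sum_range_pow_sq_mul_sq t (fun k => (qPochhammer_pos ht0.le ht1 k).ne') n
    · rw [qBinomial.eq_zero_of_lt t (by simpa using hk)]
      simp
  refine tendsto_nhds_unique ?_ (qBinomial.tendsto_add_self ht0.le ht1)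
  simpa only [hfinite, qPochhammer] using qBinomial.tendsto_tsum_pow_sq_mul_sq ht0.le ht1
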